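/- arXiv:1702.05534 — 5 statements merged into one kernel-verified Lean document; each statement's English description precedes it below -/
import Mathlib

section
/- Let a, b ∈ ℂ with a+b not zero or a negative integer, and let z : ℕ≥1 → ℂ be a sequence of nonzero complex numbers such that (k ↦ 1/z_k²) is summable and, for every t ∈ ℂ, the infinite product ∏_{k≥1} (1 + t²/z_k²) converges with value ∑_{n≥0} (−1)^n (a)_n (b)_n / (n! (a+b)_n (a+b)_{2n}) · t^{2n}. Then for every n ≥ 0, the multiple zeta value ζ_z({2}^n) := ∑_{k₁>k₂>⋯>k_n≥1} ∏_{i=1}^n 1/z_{k_i}² equals (−1)^n (a)_n (b)_n / (n! (a+b)_n (a+b)_{2n}). -/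
/-!
With `w k = 1 / z k ^ 2`, the product `∏ (1 + s w_k)` converges absolutely, and expanding it and
grouping the terms by the number of factors gives the power series `∑ eₙ(w) sⁿ` with infinite
radius of convergence, whose coefficients are the elementary symmetric sums
`eₙ(w) = ζ_z({2}ⁿ)`. Writing `s = t²`, the hypothesis identifies this entire function with
`∑ cₙ sⁿ`, `cₙ` the hypergeometric coefficients. As `e₀ = 1`, the common value is nonzero near
`0`, which forces the `c`-series to converge there, so it has positive radius too and the
coefficients agree by uniqueness of power series.
-/

open Filter Topology FormalMultilinearSeries

/-- The Pochhammer symbol `(x)_n = x(x+1)⋯(x+n-1)` over `ℂ`. -/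
noncomputable def poch (x : ℂ) (n : ℕ) : ℂ := (ascPochhammer ℂ n).eval x

/-- The multiple zeta value `ζ_z({s}^n) = ∑_{k₁ > ⋯ > k_n} ∏ᵢ 1/z_{kᵢ}^s`. -/
noncomputable def mzv (z : ℕ → ℂ) (s n : ℕ) : ℂ :=
  ∑' f : {f : Fin n → ℕ // StrictAnti f}, ∏ i, 1 / (z (f.1 i)) ^ s

section PowerSeries

variable {𝕜 : Type*} [NontriviallyNormedField 𝕜]

theorem le_radius_ofScalars_of_summable {c : ℕ → 𝕜} {s : 𝕜}
    (h : Summable fun n => c n * s ^ n) : (‖s‖₊ : ENNReal) ≤ (ofScalars 𝕜 c).radius :=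
  (ofScalars 𝕜 c).le_radius_of_tendsto (l := 0) <| by
    simpa [ofScalars_norm, norm_mul, norm_pow] using h.tendsto_atTop_zero.norm

variable [CompleteSpace 𝕜]

theorem hasFPowerSeriesAt_tsum_ofScalars {c : ℕ → 𝕜} (hc : 0 < (ofScalars 𝕜 c).radius) :
    HasFPowerSeriesAt (fun s => ∑' n, c n * s ^ n) (ofScalars 𝕜 c) 0 := by
  simpa [← ofScalarsSum.eq_1, ofScalarsSum_eq_tsum] using
    ((ofScalars 𝕜 c).hasFPowerSeriesOnBall hc).hasFPowerSeriesAt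

theorem eq_of_eventually_tsum_mul_pow_eq {c d : ℕ → 𝕜} (hc : 0 < (ofScalars 𝕜 c).radius)
    (hd : 0 < (ofScalars 𝕜 d).radius)
    (h : ∀ᶠ s in 𝓝 0, ∑' n, c n * s ^ n = ∑' n, d n * s ^ n) : c = d :=
  ofScalars_series_injective (𝕜 := 𝕜) 𝕜 <|
    (hasFPowerSeriesAt_tsum_ofScalars hc).eq_formalMultilinearSeries_of_eventually
      (hasFPowerSeriesAt_tsum_ofScalars hd) h

theorem radius_ofScalars_pos_of_eventually_tsum_mul_pow_eq {c d : ℕ → 𝕜}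
    (hc : 0 < (ofScalars 𝕜 c).radius) (hc₀ : c 0 ≠ 0)
    (h : ∀ᶠ s in 𝓝 0, ∑' n, c n * s ^ n = ∑' n, d n * s ^ n) :
    0 < (ofScalars 𝕜 d).radius := by
  have hne : ∀ᶠ s in 𝓝 0, ∑' n, c n * s ^ n ≠ 0 :=
    (hasFPowerSeriesAt_tsum_ofScalars hc).continuousAt.eventually_ne <| by
      rwa [tsum_eq_single 0 fun n hn => by simp [hn], pow_zero, mul_one]
  obtain ⟨s, hs, hcs, hcd⟩ := (eventually_mem_nhdsWithin.and
    ((hne.and h).filter_mono nhdsWithin_le_nhds)).exists (f := 𝓝[≠] (0 : 𝕜))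
  -- a non-summable series has `tsum` equal to `0`
  have hd : Summable fun n => d n * s ^ n := by
    by_contra hd
    exact hcs (hcd.trans (tsum_eq_zero_of_not_summable hd))
  exact lt_of_lt_of_le (by simpa using hs) (le_radius_ofScalars_of_summable hd)

end PowerSeries

section Esymm

variable {ι R : Type*}

noncomputable def tsumEsymm [CommSemiring R] [TopologicalSpace R] (w : ι → R) (n : ℕ) : R :=
  ∑' s : Set.powersetCard ι n, ∏ k ∈ (s : Finset ι), w k

theorem tsumEsymm_zero [CommSemiring R] [TopologicalSpace R] (w : ι → R) :
    tsumEsymm w 0 = 1 := by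
  rw [tsumEsymm, tsum_eq_single ⟨∅, Finset.card_empty⟩ fun s hs =>
    absurd (Subtype.ext (Finset.card_eq_zero.1 s.2)) hs]
  exact Finset.prod_empty

theorem tsum_prod_strictAnti_eq_tsumEsymm [LinearOrder ι] [CommSemiring R] [TopologicalSpace R]
    (w : ι → R) (n : ℕ) :
    ∑' f : {f : Fin n → ι // StrictAnti f}, ∏ i, w (f.1 i) = tsumEsymm w n := by
  let toEmb : {f : Fin n → ι // StrictAnti f} ≃ (Fin n ↪o ιᵒᵈ) :=
    { toFun := fun f => OrderEmbedding.ofStrictMono (OrderDual.toDual ∘ f.1) f.2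
      invFun := fun g => ⟨OrderDual.ofDual ∘ g, g.strictMono⟩
      left_inv := fun _ => rfl
      right_inv := fun _ => rfl }
  let e : {f : Fin n → ι // StrictAnti f} ≃ Set.powersetCard ι n :=
    toEmb.trans Set.powersetCard.ofFinEmbEquiv
  rw [tsumEsymm, ← e.tsum_eq]
  exact tsum_congr fun f => (Finset.prod_map Finset.univ (toEmb f).toEmbedding w).symm

theorem hasSum_tsumEsymm_mul_pow [NormedCommRing R] [NormOneClass R] [CompleteSpace R]
    {w : ι → R} (hw : Summable fun k => ‖w k‖) {t a : R}
    (h : HasProd (fun k => 1 + t * w k) a) :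
    HasSum (fun n => tsumEsymm w n * t ^ n) a := by
  have htw : Summable fun k => ‖t * w k‖ :=
    (hw.mul_left ‖t‖).of_nonneg_of_le (fun _ => norm_nonneg _) fun _ => norm_mul_le _ _
  have hexpand := (summable_finsetProd_of_summable_norm htw).hasSum
  rw [h.unique (hasProd_one_add_of_hasSum_prod hexpand)]
  have hfiber : (fun n => tsumEsymm w n * t ^ n) =
      fun n => ∑' s : Finset.card ⁻¹' {n}, ∏ k ∈ s.1, t * w k := by
    funext n
    have hsum : Summable fun s : Set.powersetCard ι n => ∏ k ∈ (s : Finset ι), w k :=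
      (summable_finsetProd_of_summable_norm hw).subtype _
    rw [tsumEsymm, ← hsum.tsum_mul_right]
    refine tsum_congr fun s => ?_
    rw [Finset.prod_mul_distrib, Finset.prod_const, s.2, mul_comm]
  rw [hfiber]
  exact hexpand.tsum_fiberwise Finset.card

end Esymm

theorem mzv_eq_tsumEsymm (z : ℕ → ℂ) (s n : ℕ) :
    mzv z s n = tsumEsymm (fun k => 1 / z k ^ s) n :=
  tsum_prod_strictAnti_eq_tsumEsymm (fun k => 1 / z k ^ s) n

theorem hypergeometric_mzv_two_general (a b : ℂ) (z : ℕ → ℂ)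
    (hsum : Summable (fun k => 1 / (z k) ^ 2))
    (hprod : ∀ t : ℂ, HasProd (fun k => 1 + t ^ 2 / (z k) ^ 2)
      (∑' n : ℕ, (-1 : ℂ) ^ n * (poch a n * poch b n) /
        ((Nat.factorial n : ℂ) * poch (a + b) n * poch (a + b) (2 * n)) * t ^ (2 * n)))
    (n : ℕ) :
    mzv z 2 n = (-1 : ℂ) ^ n * (poch a n * poch b n) /
      ((Nat.factorial n : ℂ) * poch (a + b) n * poch (a + b) (2 * n)) := by
  set c : ℕ → ℂ := fun m => (-1 : ℂ) ^ m * (poch a m * poch b m) /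
    ((Nat.factorial m : ℂ) * poch (a + b) m * poch (a + b) (2 * m))
  set e := tsumEsymm fun k => 1 / z k ^ 2
  have hw : Summable fun k => ‖1 / z k ^ 2‖ := summable_norm_iff.mpr hsum
  have he : ∀ s, HasSum (fun m => e m * s ^ m) (∑' m, c m * s ^ m) := by
    intro s
    obtain ⟨t, rfl⟩ := IsAlgClosed.exists_pow_nat_eq s two_pos
    have hprod_t : HasProd (fun k => 1 + t ^ 2 * (1 / z k ^ 2)) (∑' m, c m * (t ^ 2) ^ m) := by
      simpa only [div_eq_mul_one_div (t ^ 2), ← pow_mul] using hprod t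
    exact hasSum_tsumEsymm_mul_pow hw hprod_t
  have he_rad : 0 < (ofScalars ℂ e).radius :=
    lt_of_lt_of_le (by simp) (le_radius_ofScalars_of_summable (he 1).summable)
  have heq : ∀ᶠ s in 𝓝 0, ∑' m, e m * s ^ m = ∑' m, c m * s ^ m :=
    Eventually.of_forall fun s => (he s).tsum_eq
  have hc_rad := radius_ofScalars_pos_of_eventually_tsum_mul_pow_eq he_rad
    (by simp [e, tsumEsymm_zero]) heq
  rw [mzv_eq_tsumEsymm]
  exact congrFun (eq_of_eventually_tsum_mul_pow_eq he_rad hc_rad heq) n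

/-- Evaluation of the hypergeometric multiple zeta values `ζ_{a,b}({2}^n)`. -/
theorem hypergeometric_mzv_two (a b : ℂ) (hab : ∀ k : ℕ, a + b + (k : ℂ) ≠ 0)
    (z : ℕ → ℂ) (hz : ∀ k, z k ≠ 0)
    (hsum : Summable (fun k => 1 / (z k) ^ 2))
    (hprod : ∀ t : ℂ, HasProd (fun k => 1 + t ^ 2 / (z k) ^ 2)
      (∑' n : ℕ, (-1 : ℂ) ^ n * (poch a n * poch b n) /
        ((Nat.factorial n : ℂ) * poch (a + b) n * poch (a + b) (2 * n)) * t ^ (2 * n)))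
    (n : ℕ) :
    mzv z 2 n = (-1 : ℂ) ^ n * (poch a n * poch b n) /
      ((Nat.factorial n : ℂ) * poch (a + b) n * poch (a + b) (2 * n)) :=
  hypergeometric_mzv_two_general a b z hsum hprod n
end

section
/- Let N ≥ 0 be an integer, x : Fin N → ℂ, and t, y ∈ ℂ with |t·x_i| < 1 and |(y+1)·t·x_i| < 1 for every i. For integers n ≥ k ≥ 1 define S*(n,k) := ∑ over weakly decreasing k-tuples of indices i₁ ≥ i₂ ≥ ⋯ ≥ i_k in Fin N and over k-tuples (a₁,…,a_k) of positive integers with a₁+⋯+a_k = n, of ∏_{j=1}^k x_{i_j}^{a_j}; set S*(0,0) = 1 and S*(n,0) = 0 for n ≥ 1. Then ∏_{i} (1 − t·x_i)/(1 − (y+1)·t·x_i) = ∑_{n=0}^∞ (∑_{k=0}^{n} S*(n,k)·y^k) · t^n, the series on the right converging absolutely. -/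
/-!
A weakly decreasing tuple of indices in `Fin (N + 1)` either avoids the top index `N` or starts
with it; peeling off that first entry gives
`S*_{N+1}(n, k+1) = S*_N(n, k+1) + ∑_{s ≥ 1} x_N^s S*_{N+1}(n - s, k)`.
For the generating series `P_N = ∑_n (∑_k S*(n,k) y^k) Tⁿ` this says
`P_{N+1} = P_N + y · x_N T / (1 - x_N T) · P_{N+1}`, i.e. the formal identity
`P_{N+1} = P_N · (1 - x_N T) / (1 - (y+1) x_N T)`. Under the hypotheses every factor converges
absolutely at `T = t`, so the Cauchy product turns the formal identity into the claimed one,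
by induction on `N`.
-/

/-- `S*(n,k)`: the sum over weakly decreasing `k`-tuples of indices in `Fin N` and
compositions `(a₁,…,a_k)` of `n` into `k` positive parts of `∏_j x_{i_j}^{a_j}`.
In particular `S*(0,0) = 1` and `S*(n,0) = 0` for `n ≥ 1`. -/
noncomputable def SavgStar {N : ℕ} (x : Fin N → ℂ) (n k : ℕ) : ℂ :=
  ∑ a ∈ (Finset.Nat.antidiagonalTuple k n).filter (fun a => ∀ j, 0 < a j),
    ∑' f : {f : Fin k → Fin N // Antitone f}, ∏ j, x (f.1 j) ^ (a j)

open Finset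

theorem sum_filter_pos_antidiagonalTuple_succ {M : Type*} [AddCommMonoid M] (k n : ℕ)
    (H : (Fin (k + 1) → ℕ) → M) :
    ∑ a ∈ (Nat.antidiagonalTuple (k + 1) n).filter (fun a => ∀ j, 0 < a j), H a =
      ∑ p ∈ (antidiagonal n).filter (fun p => 0 < p.1),
        ∑ b ∈ (Nat.antidiagonalTuple k p.2).filter (fun b => ∀ j, 0 < b j),
          H (Fin.cons p.1 b) := by
  rw [sum_sigma']
  refine sum_nbij' (fun a => ⟨(a 0, n - a 0), Fin.tail a⟩) (fun q => Fin.cons q.1.1 q.2)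
    ?_ ?_ ?_ ?_ ?_
  · intro a ha
    simp only [mem_filter, Nat.mem_antidiagonalTuple, Fin.sum_univ_succ] at ha
    simp [Nat.mem_antidiagonalTuple, Fin.tail, ← ha.1, ha.2]
  · rintro ⟨⟨s, r⟩, b⟩ hq
    simp only [mem_sigma, mem_filter, HasAntidiagonal.mem_antidiagonal,
      Nat.mem_antidiagonalTuple] at hq
    simp [Nat.mem_antidiagonalTuple, Fin.forall_fin_succ, hq]
  · intro a _
    simp
  · rintro ⟨⟨s, r⟩, b⟩ hq
    simp only [mem_sigma, mem_filter, HasAntidiagonal.mem_antidiagonal,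
      Nat.mem_antidiagonalTuple] at hq
    simp [← hq.1.1]
  · intro a _
    simp

theorem Fin.antitone_cons_iff_of_isTop {α : Type*} [Preorder α] {k : ℕ} {a : α} (ha : IsTop a)
    {g : Fin k → α} : Antitone (Fin.cons a g : Fin (k + 1) → α) ↔ Antitone g := by
  refine ⟨fun h i j hij => by simpa using h (Fin.succ_le_succ_iff.mpr hij), fun h i j hij => ?_⟩
  cases i using Fin.cases with
  | zero => exact ha _
  | succ i =>
    cases j using Fin.cases with
    | zero => exact absurd hij (by simp)
    | succ j => simpa using h (Fin.succ_le_succ_iff.mp hij)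

theorem sum_filter_antitone_fin_succ {M : Type*} [AddCommMonoid M] (k N : ℕ)
    (G : (Fin (k + 1) → Fin (N + 1)) → M) :
    ∑ f : Fin (k + 1) → Fin (N + 1) with Antitone f, G f =
      ∑ g : Fin (k + 1) → Fin N with Antitone g, G (Fin.castSucc ∘ g) +
        ∑ g : Fin k → Fin (N + 1) with Antitone g, G (Fin.cons (Fin.last N) g) := by
  rw [← sum_filter_not_add_sum_filter _ (fun f => f 0 = Fin.last N), filter_filter,
    filter_filter]
  congr 1
  · symm
    refine sum_nbij (Fin.castSucc ∘ ·) ?_ ?_ ?_ (fun _ _ => rfl)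
    · intro g hg
      simp only [mem_filter, mem_univ, true_and] at hg ⊢
      exact ⟨Fin.strictMono_castSucc.monotone.comp_antitone hg, (Fin.castSucc_lt_last _).ne⟩
    · intro g _ g' _ h
      exact funext fun j => Fin.castSucc_injective _ (congrFun h j)
    · intro f hf
      simp only [mem_coe, mem_filter, mem_univ, true_and] at hf
      have hlt : ∀ j, f j ≠ Fin.last N := fun j h =>
        hf.2 (le_antisymm (Fin.le_last _) (h ▸ hf.1 (Fin.zero_le j)))
      refine ⟨fun j => (f j).castPred (hlt j), ?_, funext fun j => by simp⟩
      simp only [mem_coe, mem_filter, mem_univ, true_and]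
      exact fun i j hij => Fin.castPred_le_castPred_iff.mpr (hf.1 hij)
  · refine sum_nbij' Fin.tail (Fin.cons (Fin.last N) ·) ?_ ?_ ?_ ?_ ?_
    · intro f hf
      simp only [mem_filter, mem_univ, true_and] at hf ⊢
      rw [← Fin.antitone_cons_iff_of_isTop (a := Fin.last N) (fun _ => Fin.le_last _), ← hf.2,
        Fin.cons_self_tail]
      exact hf.1
    · intro g hg
      simp only [mem_filter, mem_univ, true_and] at hg ⊢
      exact ⟨(Fin.antitone_cons_iff_of_isTop (fun _ => Fin.le_last _)).mpr hg, rfl⟩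
    · intro f hf
      simp only [mem_filter, mem_univ, true_and] at hf
      simp [← hf.2]
    · intro g _
      simp
    · intro f hf
      simp only [mem_filter, mem_univ, true_and] at hf
      simp [← hf.2]

section SavgStar

variable {N : ℕ}

theorem SavgStar_eq_sum (x : Fin N → ℂ) (n k : ℕ) :
    SavgStar x n k = ∑ a ∈ (Nat.antidiagonalTuple k n).filter (fun a => ∀ j, 0 < a j),
      ∑ f : Fin k → Fin N with Antitone f, ∏ j, x (f j) ^ a j := by
  refine sum_congr rfl fun a _ => ?_
  rw [tsum_fintype, sum_subtype (p := Antitone) _ (by simp)]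

theorem SavgStar_zero_right (x : Fin N → ℂ) (n : ℕ) :
    SavgStar x n 0 = if n = 0 then 1 else 0 := by
  cases n <;> simp [SavgStar, Fintype.card_subtype, Subsingleton.antitone]

theorem SavgStar_eq_zero_of_lt (x : Fin N → ℂ) {n k : ℕ} (h : n < k) :
    SavgStar x n k = 0 := by
  refine sum_eq_zero fun a ha => absurd h (not_lt.mpr ?_)
  simp only [mem_filter, Nat.mem_antidiagonalTuple] at ha
  simpa [← ha.1] using card_nsmul_le_sum univ a 1 fun j _ => ha.2 j

theorem SavgStar_fin_zero_succ (x : Fin 0 → ℂ) (n k : ℕ) : SavgStar x n (k + 1) = 0 := by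
  simp [SavgStar]

theorem SavgStar_succ_succ (x : Fin (N + 1) → ℂ) (n k : ℕ) :
    SavgStar x n (k + 1) = SavgStar (x ∘ Fin.castSucc) n (k + 1) +
      ∑ p ∈ (antidiagonal n).filter (fun p => 0 < p.1),
        x (Fin.last N) ^ p.1 * SavgStar x p.2 k := by
  simp only [SavgStar_eq_sum, sum_filter_antitone_fin_succ, sum_add_distrib]
  congr 1
  rw [sum_filter_pos_antidiagonalTuple_succ]
  simp only [mul_sum, Fin.prod_univ_succ, Fin.cons_zero, Fin.cons_succ]

end SavgStar

open PowerSeries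

noncomputable def starSeries {N : ℕ} (x : Fin N → ℂ) (y : ℂ) : ℂ⟦X⟧ :=
  mk fun n => ∑ k ∈ range (n + 1), SavgStar x n k * y ^ k

section starSeries

variable {N : ℕ}

theorem coeff_starSeries_eq_sum_range (x : Fin N → ℂ) (y : ℂ) {n M : ℕ} (h : n < M) :
    coeff n (starSeries x y) = ∑ k ∈ range M, SavgStar x n k * y ^ k := by
  rw [starSeries, coeff_mk]
  refine sum_subset (range_subset_range.2 h) fun k _ hk => ?_
  rw [SavgStar_eq_zero_of_lt x (by simpa using hk), zero_mul]

theorem starSeries_fin_zero (x : Fin 0 → ℂ) (y : ℂ) : starSeries x y = 1 := by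
  ext n
  simp [starSeries, sum_range_succ', SavgStar_fin_zero_succ, SavgStar_zero_right, coeff_one]

theorem coeff_starSeries_succ (x : Fin (N + 1) → ℂ) (y : ℂ) (n : ℕ) :
    coeff n (starSeries x y) = coeff n (starSeries (x ∘ Fin.castSucc) y) +
      ∑ p ∈ (antidiagonal n).filter (fun p => 0 < p.1),
        y * x (Fin.last N) ^ p.1 * coeff p.2 (starSeries x y) := by
  have hinner : ∀ p ∈ (antidiagonal n).filter (fun p => 0 < p.1),
      y * x (Fin.last N) ^ p.1 * coeff p.2 (starSeries x y) =
        ∑ k ∈ range n, x (Fin.last N) ^ p.1 * SavgStar x p.2 k * y ^ (k + 1) := by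
    intro p hp
    rw [mem_filter, HasAntidiagonal.mem_antidiagonal] at hp
    rw [coeff_starSeries_eq_sum_range x y (by omega : p.2 < n), mul_sum]
    exact sum_congr rfl fun k _ => by ring
  rw [sum_congr rfl hinner, sum_comm]
  simp only [starSeries, coeff_mk, sum_range_succ' _ n, SavgStar_succ_succ, SavgStar_zero_right,
    add_mul, sum_add_distrib, sum_mul]
  ring

-- `rescale a (mk 1)` is the geometric series `∑ aⁿ Tⁿ = (1 - a T)⁻¹`.
theorem starSeries_succ (x : Fin (N + 1) → ℂ) (y : ℂ) :
    starSeries x y = starSeries (x ∘ Fin.castSucc) y +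
      C y * (rescale (x (Fin.last N)) (mk 1) - 1) * starSeries x y := by
  ext n
  rw [coeff_starSeries_succ, map_add, coeff_mul, sum_filter]
  congr 1
  refine sum_congr rfl fun p _ => ?_
  rw [coeff_C_mul, map_sub, coeff_rescale, coeff_mk, coeff_one]
  by_cases h : p.1 = 0 <;> simp [h]

theorem PowerSeries.rescale_mk_one_mul_one_sub_C_mul_X {R : Type*} [CommRing R] (a : R) :
    rescale a (mk 1) * (1 - C a * X) = 1 := by
  simpa [rescale_X] using congrArg (rescale a) (mk_one_mul_one_sub_eq_one (S := R))

theorem starSeries_succ_eq_mul (x : Fin (N + 1) → ℂ) (y : ℂ) :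
    starSeries x y = starSeries (x ∘ Fin.castSucc) y *
      ((1 - C (x (Fin.last N)) * X) * rescale ((y + 1) * x (Fin.last N)) (mk 1)) := by
  set z := x (Fin.last N)
  have hz := rescale_mk_one_mul_one_sub_C_mul_X z
  have hw := rescale_mk_one_mul_one_sub_C_mul_X ((y + 1) * z)
  rw [map_mul, map_add, map_one] at hw
  linear_combination (rescale ((y + 1) * z) (mk 1) * (1 - C z * X)) * starSeries_succ x y +
    (rescale ((y + 1) * z) (mk 1) * C y * starSeries x y) * hz - starSeries x y * hw

end starSeries

section Evaluation

variable {𝕜 : Type*} [RCLike 𝕜]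

theorem hasSum_coeff_one_mul_pow (t : 𝕜) :
    HasSum (fun n => coeff n (1 : 𝕜⟦X⟧) * t ^ n) 1 := by
  simpa using hasSum_single (f := fun n => coeff n (1 : 𝕜⟦X⟧) * t ^ n) 0
    fun n hn => by simp [coeff_one, hn]

theorem hasSum_coeff_mul_mul_pow {A B : 𝕜⟦X⟧} {t a b : 𝕜}
    (hA : HasSum (fun n => coeff n A * t ^ n) a) (hB : HasSum (fun n => coeff n B * t ^ n) b) :
    HasSum (fun n => coeff n (A * B) * t ^ n) (a * b) := by
  have hcoeff : ∀ n, coeff n (A * B) * t ^ n =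
      ∑ p ∈ antidiagonal n, (coeff p.1 A * t ^ p.1) * (coeff p.2 B * t ^ p.2) := fun n => by
    rw [coeff_mul, sum_mul]
    refine sum_congr rfl fun p hp => ?_
    rw [← HasAntidiagonal.mem_antidiagonal.1 hp, pow_add]
    ring
  have hA' := summable_norm_iff.2 hA.summable
  have hB' := summable_norm_iff.2 hB.summable
  rw [funext hcoeff, ← hA.tsum_eq, ← hB.tsum_eq,
    tsum_mul_tsum_eq_tsum_sum_antidiagonal_of_summable_norm hA' hB']
  exact (summable_norm_sum_mul_antidiagonal_of_summable_norm hA' hB').of_norm.hasSum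

theorem hasSum_coeff_one_sub_C_mul_X_mul_rescale_mk_one {a w t : 𝕜} (h : ‖w * t‖ < 1) :
    HasSum (fun n => coeff n ((1 - C a * X) * rescale w (mk 1)) * t ^ n)
      ((1 - a * t) / (1 - w * t)) := by
  have hpoly : HasSum (fun n => coeff n (1 - C a * X) * t ^ n) (1 - a * t) := by
    refine ((hasSum_coeff_one_mul_pow t).sub (hasSum_ite_eq 1 (a * t))).congr_fun fun n => ?_
    by_cases hn : n = 1 <;> simp [coeff_X, hn]
  have hgeom : HasSum (fun n => coeff n (rescale w (mk 1)) * t ^ n) (1 - w * t)⁻¹ := by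
    simpa [mul_pow] using hasSum_geometric_of_norm_lt_one h
  simpa only [div_eq_mul_inv] using hasSum_coeff_mul_mul_pow hpoly hgeom

end Evaluation

/-- The generating product identity (2.1d) for the averages of multiple zeta star
values of fixed weight and depth. -/
theorem hoffman_generating_product_star (N : ℕ) (x : Fin N → ℂ) (t y : ℂ)
    (ht : ∀ i, ‖t * x i‖ < 1) (hty : ∀ i, ‖(y + 1) * t * x i‖ < 1) :
    HasSum (fun n : ℕ => (∑ k ∈ Finset.range (n + 1), SavgStar x n k * y ^ k) * t ^ n)
      (∏ i, (1 - t * x i) / (1 - (y + 1) * t * x i)) := by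
  suffices HasSum (fun n => coeff n (starSeries x y) * t ^ n)
      (∏ i, (1 - t * x i) / (1 - (y + 1) * t * x i)) by
    simpa only [starSeries, coeff_mk] using this
  induction N with
  | zero =>
    rw [starSeries_fin_zero, Fin.prod_univ_zero]
    exact hasSum_coeff_one_mul_pow t
  | succ N ih =>
    set z := x (Fin.last N)
    have hfactor := hasSum_coeff_one_sub_C_mul_X_mul_rescale_mk_one (a := z) (w := (y + 1) * z)
      (t := t) (by rw [mul_right_comm]; exact hty _)
    rw [starSeries_succ_eq_mul, Fin.prod_univ_castSucc,
      show (1 - t * z) / (1 - (y + 1) * t * z) = (1 - z * t) / (1 - (y + 1) * z * t) by ring]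
    exact hasSum_coeff_mul_mul_pow
      (ih (x ∘ Fin.castSucc) (fun i => ht i.castSucc) (fun i => hty i.castSucc)) hfactor
end

section
/- Let ν ∈ ℂ with ν not equal to any negative integer, and let n ≥ 0. Then ∑_{l=0}^{2n} (−1)^l / (l! · (ν+1)_l · (2n−l)! · (ν+1)_{2n−l}) = (−1)^n / (n! · (ν+1)_n · (ν+1)_{2n}). -/
open scoped Nat

theorem poch_zero (x : ℂ) : poch x 0 = 1 := by simp [poch]

theorem poch_succ (x : ℂ) (m : ℕ) : poch x (m + 1) = poch x m * (x + m) := by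
  simp [poch, ascPochhammer_succ_right]

theorem poch_ne_zero {x : ℂ} (hx : ∀ k : ℕ, x + k ≠ 0) (m : ℕ) : poch x m ≠ 0 := by
  induction m with
  | zero => simp [poch_zero]
  | succ m ih => rw [poch_succ]; exact mul_ne_zero ih (hx m)

noncomputable def kummerTerm (ν : ℂ) (l k : ℕ) : ℂ :=
  (-1) ^ l / (l ! * poch (ν + 1) l * k ! * poch (ν + 1) k)

noncomputable def kummerSum (ν : ℂ) (m : ℕ) : ℂ :=
  ∑ l ∈ Finset.range (m + 1), kummerTerm ν l (m - l)

noncomputable def kummerValue (ν : ℂ) (n : ℕ) : ℂ :=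
  (-1) ^ n / (n ! * poch (ν + 1) n * poch (ν + 1) (2 * n))

/-- The WZ certificate `R(l + k, l) a(l, k)`. -/
noncomputable def kummerCert (ν : ℂ) (l k : ℕ) : ℂ :=
  l * (l + ν) * (-2 * l ^ 2 + (6 * (l + k : ℂ) + 4 * ν - 2) * l + 3 * (l + k : ℂ)
    - 5 * (l + k : ℂ) ^ 2 + 2 * ν - 2 * ν ^ 2 - 7 * (l + k : ℂ) * ν) * kummerTerm ν l k

section

variable {ν : ℂ}

theorem kummerTerm_succ_left {l : ℕ} (hl : ν + 1 + l ≠ 0) (k : ℕ) :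
    (l + 1) * (ν + 1 + l) * kummerTerm ν (l + 1) k = -kummerTerm ν l k := by
  have hl' : ((l : ℂ) + 1) * (ν + 1 + l) ≠ 0 := mul_ne_zero (Nat.cast_add_one_ne_zero l) hl
  calc (l + 1) * (ν + 1 + l) * kummerTerm ν (l + 1) k
      = ((l + 1) * (ν + 1 + l)) * -(-1) ^ l /
          (((l + 1) * (ν + 1 + l)) * (l ! * poch (ν + 1) l * k ! * poch (ν + 1) k)) := by
        simp only [kummerTerm, poch_succ, Nat.factorial_succ]; push_cast; ring
    _ = -kummerTerm ν l k := by rw [mul_div_mul_left _ _ hl', kummerTerm, neg_div]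

theorem kummerTerm_succ_right (l : ℕ) {k : ℕ} (hk : ν + 1 + k ≠ 0) :
    (k + 1) * (ν + 1 + k) * kummerTerm ν l (k + 1) = kummerTerm ν l k := by
  have hk' : ((k : ℂ) + 1) * (ν + 1 + k) ≠ 0 := mul_ne_zero (Nat.cast_add_one_ne_zero k) hk
  calc (k + 1) * (ν + 1 + k) * kummerTerm ν l (k + 1)
      = ((k + 1) * (ν + 1 + k)) * (-1) ^ l /
          (((k + 1) * (ν + 1 + k)) * (l ! * poch (ν + 1) l * k ! * poch (ν + 1) k)) := by
        simp only [kummerTerm, poch_succ, Nat.factorial_succ]; push_cast; ring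
    _ = kummerTerm ν l k := by rw [mul_div_mul_left _ _ hk', kummerTerm]

theorem kummerCert_zero_left (k : ℕ) : kummerCert ν 0 k = 0 := by
  simp [kummerCert]

variable (hν : ∀ k : ℕ, ν + 1 + k ≠ 0)
include hν

theorem kummerTerm_wz (l k : ℕ) :
    (l + k + 2) * (l + k + 2 + ν) * (l + k + 2 + 2 * ν) * (l + k + 1 + ν) * kummerTerm ν l (k + 2)
      + 4 * kummerTerm ν l k = kummerCert ν (l + 1) (k + 1) - kummerCert ν l (k + 2) := by
  have hl := kummerTerm_succ_left (hν l) (k + 1)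
  have hk := kummerTerm_succ_right l (hν k)
  have hk' := kummerTerm_succ_right l (hν (k + 1))
  simp only [kummerCert]
  push_cast at *
  -- both ratio lemmas turn every term into a multiple of `a(l, k + 2)`
  set Q : ℂ := -2 * ((l : ℂ) + 1) ^ 2 + (6 * ((l : ℂ) + 1 + (k + 1)) + 4 * ν - 2) * ((l : ℂ) + 1)
    + 3 * ((l : ℂ) + 1 + (k + 1)) - 5 * ((l : ℂ) + 1 + (k + 1)) ^ 2 + 2 * ν - 2 * ν ^ 2
    - 7 * ((l : ℂ) + 1 + (k + 1)) * ν
  linear_combination -Q * hl - 4 * hk - (Q + 4 * (k + 1) * (ν + 1 + k)) * hk'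

theorem kummerCert_boundary (m : ℕ) :
    kummerCert ν (m + 1) 1 + (m + 2) * (m + 2 + ν) * (m + 2 + 2 * ν) * (m + 1 + ν) *
      (kummerTerm ν (m + 1) 1 + kummerTerm ν (m + 2) 0) = 0 := by
  have hl := kummerTerm_succ_left (hν (m + 1)) 0
  have hk := kummerTerm_succ_right (m + 1) (hν 0)
  simp only [kummerCert]
  push_cast at *
  linear_combination (m + 2 + 2 * ν) * (m + 1 + ν) * (hl + hk)

theorem kummerSum_recurrence (m : ℕ) :
    (m + 2) * (m + 2 + ν) * (m + 2 + 2 * ν) * (m + 1 + ν) * kummerSum ν (m + 2)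
      + 4 * kummerSum ν m = 0 := by
  set C : ℂ := (m + 2) * (m + 2 + ν) * (m + 2 + 2 * ν) * (m + 1 + ν)
  set f : ℕ → ℂ := fun l ↦ kummerCert ν l (m + 2 - l)
  have hwz : ∀ l ∈ Finset.range (m + 1),
      C * kummerTerm ν l (m + 2 - l) + 4 * kummerTerm ν l (m - l) = f (l + 1) - f l := by
    intro l hl
    obtain ⟨k, rfl⟩ := Nat.exists_eq_add_of_le (Finset.mem_range_succ_iff.mp hl)
    simp only [f, C, show l + k + 2 - l = k + 2 by omega, show l + k + 2 - (l + 1) = k + 1 by omega,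
      Nat.add_sub_cancel_left]
    convert kummerTerm_wz hν l k using 2
    push_cast
    ring
  have htele : ∑ l ∈ Finset.range (m + 1), (f (l + 1) - f l) = kummerCert ν (m + 1) 1 := by
    rw [Finset.sum_range_sub]
    simp [f, kummerCert_zero_left]
  have hsplit : kummerSum ν (m + 2) = ∑ l ∈ Finset.range (m + 1), kummerTerm ν l (m + 2 - l)
      + kummerTerm ν (m + 1) 1 + kummerTerm ν (m + 2) 0 := by
    simp [kummerSum, Finset.sum_range_succ, show m + 2 - (m + 1) = 1 by omega]
  rw [← Finset.sum_congr rfl hwz, Finset.sum_add_distrib, ← Finset.mul_sum, ← Finset.mul_sum]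
    at htele
  rw [hsplit, kummerSum]
  linear_combination htele + kummerCert_boundary hν m

theorem kummerValue_recurrence (n : ℕ) :
    ((2 * n : ℕ) + 2) * ((2 * n : ℕ) + 2 + ν) * ((2 * n : ℕ) + 2 + 2 * ν) * ((2 * n : ℕ) + 1 + ν)
      * kummerValue ν (n + 1) + 4 * kummerValue ν n = 0 := by
  have hn := hν n
  have h2n := hν (2 * n)
  have h2n1 := hν (2 * n + 1)
  have hfac : (n ! : ℂ) ≠ 0 := Nat.cast_ne_zero.mpr n.factorial_ne_zero
  have hpn := poch_ne_zero hν n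
  have hp2n := poch_ne_zero hν (2 * n)
  rw [kummerValue, kummerValue, show 2 * (n + 1) = 2 * n + 1 + 1 by ring, poch_succ, poch_succ,
    poch_succ, Nat.factorial_succ]
  push_cast at *
  field_simp
  ring

theorem kummerSum_two_mul (n : ℕ) : kummerSum ν (2 * n) = kummerValue ν n := by
  induction n with
  | zero => simp [kummerSum, kummerTerm, kummerValue, poch_zero]
  | succ n ih =>
    have hrec := kummerSum_recurrence hν (2 * n)
    rw [ih] at hrec
    have hC : ((2 * n : ℕ) + 2) * ((2 * n : ℕ) + 2 + ν) * ((2 * n : ℕ) + 2 + 2 * ν)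
        * ((2 * n : ℕ) + 1 + ν) ≠ (0 : ℂ) := by
      have hn := hν n
      have h2n := hν (2 * n)
      have h2n1 := hν (2 * n + 1)
      push_cast at *
      refine mul_ne_zero (mul_ne_zero (mul_ne_zero (by norm_cast) ?_) ?_) ?_
      · exact fun h ↦ h2n1 (by linear_combination h)
      · exact fun h ↦ hn (by linear_combination h / 2)
      · exact fun h ↦ h2n (by linear_combination h)
    refine mul_left_cancel₀ hC ?_
    linear_combination hrec - kummerValue_recurrence hν n

end

/-- The alternating convolution identity equivalent to Kummer's evaluation of
`₂F₁(−2n, −2n−ν; ν+1; −1)`. -/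
theorem kummer_convolution (ν : ℂ) (hν : ∀ k : ℕ, ν ≠ -((k : ℂ) + 1)) (n : ℕ) :
    ∑ l ∈ Finset.range (2 * n + 1),
        (-1 : ℂ) ^ l / ((Nat.factorial l : ℂ) * poch (ν + 1) l *
          (Nat.factorial (2 * n - l) : ℂ) * poch (ν + 1) (2 * n - l)) =
      (-1 : ℂ) ^ n / ((Nat.factorial n : ℂ) * poch (ν + 1) n * poch (ν + 1) (2 * n)) :=
  kummerSum_two_mul (fun k h ↦ hν k (by linear_combination h)) n
end

section
/- For all integers k > n ≥ 1, the Bernoulli numbers satisfy, in ℚ: ∑_{j=0}^{n} B_{2n−2j} · C(2k−2j−1, k) · C(2n+1, 2j+1) = ((2n+1)/2) · C(2k−2n, k). -/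
/-!
Let `L` be the linear functional on `ℚ[X]` with `L (X ^ i) = C(2k - i, k)`. Reading off the
coefficient of `X ^ k` in `X ^ j (1 + X) ^ (2k - j) = ∑ᵢ (-1) ^ i C(j, i) (1 + X) ^ (2k - i)` gives
`L ((1 - X) ^ j) = L (X ^ j)` for `j ≤ 2k`, so `L` is invariant under `p(X) ↦ p(1 - X)` on
polynomials of degree at most `2k`. As `B_{2n+1}(1 - X) = -B_{2n+1}(X)` and `2n + 1 ≤ 2k`, this
forces `L (B_{2n+1}) = 0`. Split this sum by the parity of `i`: the odd `i` give the left-hand side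
of the identity, and among the even `i` only `i = 2n` survives, with coefficient
`C(2n+1, 2n) B_1 = -(2n + 1)/2`, because the odd Bernoulli numbers beyond `B_1` vanish.
-/

open Finset

section

open Polynomial

variable {R : Type*} [CommRing R]

theorem sum_neg_one_pow_mul_choose_mul_one_add_X_pow {j m : ℕ} (h : j ≤ m) :
    ∑ i ∈ range (j + 1), C ((-1 : R) ^ i * j.choose i) * (1 + X) ^ (m - i) =
      X ^ j * (1 + X) ^ (m - j) := by
  rw [show (X : R[X]) = -1 + (1 + X) by ring, add_pow, sum_mul]
  refine sum_congr rfl fun i hi => ?_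
  rw [show m - i = (j - i) + (m - j) by grind, pow_add]
  simp only [map_mul, map_pow, map_neg, map_one, map_natCast]
  ring

theorem sum_neg_one_pow_mul_choose_mul_choose_two_mul_sub {j k : ℕ} (h : j ≤ 2 * k) :
    ∑ i ∈ range (j + 1), (-1 : R) ^ i * j.choose i * (2 * k - i).choose k =
      (2 * k - j).choose k := by
  have hcoeff := congrArg (coeff · k) (sum_neg_one_pow_mul_choose_mul_one_add_X_pow (R := R) h)
  simp only [finsetSum_coeff, coeff_C_mul, coeff_X_pow_mul', coeff_one_add_X_pow] at hcoeff
  rw [hcoeff]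
  split_ifs with hjk
  · rw [Nat.choose_symm_of_eq_add (show 2 * k - j = (k - j) + k by omega)]
  · rw [Nat.choose_eq_zero_of_lt (by omega), Nat.cast_zero]

variable (R) in
def binomFunctional (k : ℕ) : R[X] →ₗ[R] R :=
  lsum fun i => LinearMap.mulRight R ((2 * k - i).choose k : R)

theorem binomFunctional_eq_sum_range {k d : ℕ} {p : R[X]} (hp : p.natDegree < d) :
    binomFunctional R k p = ∑ i ∈ range d, p.coeff i * (2 * k - i).choose k := by
  rw [binomFunctional, lsum_apply, sum_over_range' _ (fun _ => map_zero _) d hp]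
  simp only [LinearMap.mulRight_apply]

theorem binomFunctional_X_pow (k j : ℕ) :
    binomFunctional R k (X ^ j) = (2 * k - j).choose k := by
  rw [← monomial_one_right_eq_X_pow, binomFunctional, lsum_apply,
    sum_monomial_index _ _ (LinearMap.map_zero _)]
  simp only [LinearMap.mulRight_apply, one_mul]

theorem binomFunctional_one_sub_X_pow {k j : ℕ} (h : j ≤ 2 * k) :
    binomFunctional R k ((1 - X) ^ j) = (2 * k - j).choose k := by
  have hexpand : (1 - X : R[X]) ^ j = ∑ i ∈ range (j + 1), ((-1 : R) ^ i * j.choose i) • X ^ i := by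
    rw [sub_eq_neg_add, add_pow]
    refine sum_congr rfl fun i _ => ?_
    rw [smul_eq_C_mul]
    simp only [map_mul, map_pow, map_neg, map_one, map_natCast]
    ring
  simp only [hexpand, map_sum, map_smul, binomFunctional_X_pow, smul_eq_mul]
  exact sum_neg_one_pow_mul_choose_mul_choose_two_mul_sub h

theorem binomFunctional_comp_one_sub_X {k : ℕ} {p : R[X]} (hp : p.natDegree ≤ 2 * k) :
    binomFunctional R k (p.comp (1 - X)) = binomFunctional R k p := by
  conv_lhs => rw [p.as_sum_range_C_mul_X_pow]
  conv_rhs => rw [p.as_sum_range_C_mul_X_pow]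
  simp only [← smul_eq_C_mul, Polynomial.sum_comp, smul_comp, X_pow_comp, map_sum, map_smul]
  refine sum_congr rfl fun j hj => ?_
  rw [binomFunctional_one_sub_X_pow (by grind), binomFunctional_X_pow]

end

namespace Polynomial

theorem natDegree_bernoulli_le (n : ℕ) : (bernoulli n).natDegree ≤ n :=
  natDegree_le_iff_coeff_eq_zero.mpr fun i hi => by rw [coeff_bernoulli, if_neg (not_le.mpr hi)]

theorem coeff_bernoulli_two_mul_add_one_two_mul (n j : ℕ) :
    (bernoulli (2 * n + 1)).coeff (2 * j) = if j = n then -(2 * n + 1 : ℚ) / 2 else 0 := by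
  rw [coeff_bernoulli]
  split_ifs with hle hjn hjn
  · subst hjn
    rw [show 2 * j + 1 - 2 * j = 1 by omega, _root_.bernoulli_one, Nat.choose_succ_self_right]
    push_cast
    ring
  · rw [_root_.bernoulli_eq_zero_of_odd (by grind) (by grind), zero_mul]
  · omega
  · rfl

theorem binomFunctional_bernoulli_eq_zero {n k : ℕ} (hn : Odd n) (h : n ≤ 2 * k) :
    binomFunctional ℚ k (bernoulli n) = 0 := by
  have hsymm := binomFunctional_comp_one_sub_X ((natDegree_bernoulli_le n).trans h)
  rw [bernoulli_comp_one_sub_X, hn.neg_one_pow, neg_one_mul, map_neg] at hsymm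
  linarith

end Polynomial

theorem Finset.sum_range_two_mul {M : Type*} [AddCommMonoid M] (f : ℕ → M) (n : ℕ) :
    ∑ i ∈ range (2 * n), f i = ∑ j ∈ range n, f (2 * j) + ∑ j ∈ range n, f (2 * j + 1) := by
  induction n with
  | zero => simp
  | succ n ih =>
    rw [show 2 * (n + 1) = 2 * n + 1 + 1 by ring, sum_range_succ, sum_range_succ, ih,
      sum_range_succ, sum_range_succ]
    abel

theorem gessel_viennot_general (n k : ℕ) (hk : n < k) :
    ∑ j ∈ Finset.range (n + 1),
        bernoulli (2 * n - 2 * j) * (Nat.choose (2 * k - 2 * j - 1) k : ℚ) *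
          (Nat.choose (2 * n + 1) (2 * j + 1) : ℚ) =
      ((2 * n + 1 : ℚ) / 2) * (Nat.choose (2 * k - 2 * n) k : ℚ) := by
  have hvanish := Polynomial.binomFunctional_bernoulli_eq_zero (k := k) (odd_two_mul_add_one n)
    (by omega)
  rw [binomFunctional_eq_sum_range (d := 2 * (n + 1))
      (by linarith [Polynomial.natDegree_bernoulli_le (2 * n + 1)]), sum_range_two_mul] at hvanish
  simp only [Polynomial.coeff_bernoulli_two_mul_add_one_two_mul, ite_mul, zero_mul, sum_ite_eq',
    mem_range, Nat.lt_succ_self, if_true] at hvanish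
  have hodd : ∀ j ∈ range (n + 1),
      (Polynomial.bernoulli (2 * n + 1)).coeff (2 * j + 1) * ((2 * k - (2 * j + 1)).choose k : ℚ) =
        bernoulli (2 * n - 2 * j) * ((2 * k - 2 * j - 1).choose k : ℚ) *
          ((2 * n + 1).choose (2 * j + 1) : ℚ) := fun j hj => by
    rw [Polynomial.coeff_bernoulli, if_pos (by grind),
      show 2 * n + 1 - (2 * j + 1) = 2 * n - 2 * j by omega,
      show 2 * k - (2 * j + 1) = 2 * k - 2 * j - 1 by omega]
    ring
  rw [sum_congr rfl hodd] at hvanish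
  linarith

/-- The Gessel–Viennot identity for Bernoulli numbers, valid in the range `k > n`. -/
theorem gessel_viennot (n k : ℕ) (hn : 1 ≤ n) (hk : n < k) :
    ∑ j ∈ Finset.range (n + 1),
        bernoulli (2 * n - 2 * j) * (Nat.choose (2 * k - 2 * j - 1) k : ℚ) *
          (Nat.choose (2 * n + 1) (2 * j + 1) : ℚ) =
      ((2 * n + 1 : ℚ) / 2) * (Nat.choose (2 * k - 2 * n) k : ℚ) :=
  gessel_viennot_general n k hk
end

section
/- For every integer n ≥ 0 the following two identities between real numbers hold: (i) Γ(5/6) / (12^n · (3n)! · Γ(n + 5/6)) = (2/3)^{4n} · 1/(2^{4n} · n! · (2/3)_{2n} · (2/3)_n); (ii) Γ(7/6) / (12^n · (3n+1)! · Γ(n + 7/6)) = (2/3)^{4n} · 1/(2^{4n} · n! · (4/3)_{2n} · (4/3)_n). -/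
/-- The Pochhammer symbol `(x)_n = x(x+1)⋯(x+n-1)` over `ℝ`. -/
noncomputable def pochR (x : ℝ) (n : ℕ) : ℝ := (ascPochhammer ℝ n).eval x

/-!
Both sides are products of Pochhammer symbols: `Γ(a + n) = (a)_n Γ(a)`, and Gauss's
multiplication formula `(x)_{mn} = m^{mn} ∏_{j<m} ((x+j)/m)_n` splits
`(3n)! = (1)_{3n}`, `(3n+1)! = (2)_{3n}` into three symbols of step `1/3` and `(a)_{2n}` into
two of step `1/2`. After this splitting the Pochhammer factors on the two sides coincide, and
what remains is `(2/3)^{4n} · 12^n · 27^n = 2^{4n} · 4^n`.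
-/

open Finset Nat

theorem pochR_succ (x : ℝ) (n : ℕ) : pochR x (n + 1) = pochR x n * (x + n) :=
  ascPochhammer_succ_eval n x

theorem pochR_eq_prod (x : ℝ) (n : ℕ) : pochR x n = ∏ k ∈ range n, (x + k) := by
  induction n with
  | zero => simp [pochR]
  | succ n ih => rw [pochR_succ, ih, prod_range_succ]

theorem pochR_pos {x : ℝ} (hx : 0 < x) (n : ℕ) : 0 < pochR x n :=
  ascPochhammer_pos n x hx

theorem pochR_one (n : ℕ) : pochR 1 n = n ! :=
  ascPochhammer_eval_one ℝ n

theorem pochR_add (x : ℝ) (a b : ℕ) : pochR x (a + b) = pochR x a * pochR (x + a) b := by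
  simp only [pochR_eq_prod, prod_range_add, Nat.cast_add, add_assoc]

theorem pochR_mul (x : ℝ) (m n : ℕ) :
    pochR x (m * n) = (m : ℝ) ^ (m * n) * ∏ j ∈ range m, pochR ((x + j) / m) n := by
  rcases eq_or_ne m 0 with rfl | hm
  · simp [pochR_eq_prod]
  induction n with
  | zero => simp [pochR_eq_prod]
  | succ n ih =>
    have hblock : ∏ j ∈ range m, (x + ↑(m * n) + j) =
        (m : ℝ) ^ m * ∏ j ∈ range m, ((x + j) / m + n) := by
      rw [show (m : ℝ) ^ m = ∏ _j ∈ range m, (m : ℝ) by simp, ← prod_mul_distrib]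
      refine prod_congr rfl fun j _ => ?_
      field_simp
      push_cast
      ring
    rw [Nat.mul_succ, pochR_add, ih, pochR_eq_prod (x + _), hblock, pow_add]
    simp only [pochR_succ, prod_mul_distrib]
    ring

theorem pochR_two_mul (x : ℝ) (n : ℕ) :
    pochR x (2 * n) = 4 ^ n * pochR (x / 2) n * pochR ((x + 1) / 2) n := by
  rw [pochR_mul, pow_mul]
  norm_num [prod_range_succ]
  ring

theorem pochR_three_mul (x : ℝ) (n : ℕ) :
    pochR x (3 * n) =
      27 ^ n * pochR (x / 3) n * pochR ((x + 1) / 3) n * pochR ((x + 2) / 3) n := by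
  rw [pochR_mul, pow_mul]
  norm_num [prod_range_succ]
  ring

theorem factorial_three_mul (n : ℕ) :
    ((3 * n)! : ℝ) = 27 ^ n * n ! * pochR (1 / 3) n * pochR (2 / 3) n := by
  rw [← pochR_one, ← pochR_one, pochR_three_mul]
  norm_num only
  ring

theorem factorial_three_mul_add_one (n : ℕ) :
    ((3 * n + 1)! : ℝ) = 27 ^ n * n ! * pochR (2 / 3) n * pochR (4 / 3) n := by
  rw [← pochR_one, ← pochR_one, add_comm, pochR_add, pochR_one 1, pochR_three_mul]
  norm_num only
  ring

theorem Gamma_add_nat_eq_pochR_mul {x : ℝ} (hx : ∀ k : ℕ, x + k ≠ 0) (n : ℕ) :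
    Real.Gamma (x + n) = pochR x n * Real.Gamma x := by
  induction n with
  | zero => simp [pochR]
  | succ n ih =>
    rw [Nat.cast_succ, ← add_assoc, Real.Gamma_add_one (hx n), ih, pochR_succ]
    ring

/-- The relation between Airy multiple zeta values and Bessel multiple zeta values:
(i)  `ζ_Ai({2}^{3n}) = (2/3)^{4n} · ζ_{B,−1/3}({4}^n)` and
(ii) `ζ_Ai({2}^{3n+1})/ζ_Ai({2}) = (2/3)^{4n} · ζ_{B,1/3}({4}^n)`,
written in closed form. -/
theorem airy_bessel_relation (n : ℕ) :
    (Real.Gamma (5 / 6) /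
        (12 ^ n * (Nat.factorial (3 * n) : ℝ) * Real.Gamma ((n : ℝ) + 5 / 6)) =
      (2 / 3 : ℝ) ^ (4 * n) *
        (1 / (2 ^ (4 * n) * (Nat.factorial n : ℝ) * pochR (2 / 3) (2 * n) * pochR (2 / 3) n))) ∧
    (Real.Gamma (7 / 6) /
        (12 ^ n * (Nat.factorial (3 * n + 1) : ℝ) * Real.Gamma ((n : ℝ) + 7 / 6)) =
      (2 / 3 : ℝ) ^ (4 * n) *
        (1 / (2 ^ (4 * n) * (Nat.factorial n : ℝ) * pochR (4 / 3) (2 * n) * pochR (4 / 3) n))) := by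
  have hΓ (x : ℝ) (hx : 0 < x) : Real.Gamma (n + x) = pochR x n * Real.Gamma x := by
    rw [add_comm]
    exact Gamma_add_nat_eq_pochR_mul (fun k => by positivity) n
  have hpoch (x : ℝ) (hx : 0 < x) : pochR x n ≠ 0 := (pochR_pos hx n).ne'
  have hΓ_ne (x : ℝ) (hx : 0 < x) : Real.Gamma x ≠ 0 := (Real.Gamma_pos_of_pos hx).ne'
  have hpow : (2 / 3 : ℝ) ^ (4 * n) * 12 ^ n * 27 ^ n = 2 ^ (4 * n) * 4 ^ n := by
    rw [pow_mul, pow_mul, ← mul_pow, ← mul_pow, ← mul_pow]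
    norm_num
  constructor
  · rw [hΓ _ (by norm_num), factorial_three_mul, pochR_two_mul]
    norm_num
    field_simp [hpoch, hΓ_ne]
    linear_combination -hpow
  · rw [hΓ _ (by norm_num), factorial_three_mul_add_one, pochR_two_mul]
    norm_num
    field_simp [hpoch, hΓ_ne]
    linear_combination -hpow
end
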